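/- arXiv:quant-ph/0202053 — 2 statements merged into one kernel-verified Lean document; each statement's English description precedes it below -/
import Mathlib

section
/- With notation as above (Q = ∑_k c(k) σ(t_{k₁}^1) ⊗ ⋯ ⊗ σ(t_{kₙ}^n) with σ(t) = [[0, e^{-it}],[e^{it},0]], c real-valued, ∑ c(k)² arbitrary), the operator norm of Q equals max over ω ∈ {−1,1}^n of |∑_k c(k) exp(i(ω₁ t_{k₁}^1 + ⋯ + ωₙ t_{kₙ}^n))|. -/
/-!
Each `σ(t)` sends `|b⟩` to a phase times `|¬b⟩`, so `Q` sends `|ω⟩` to `λ(ω) |−ω⟩`: it is the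
permutation matrix of the global spin flip times `diagonal λ`. Permutation matrices are unitary,
and the L2 operator norm of a diagonal matrix is the largest modulus of its entries.
-/

open Matrix Finset Complex
open scoped Matrix.Norms.L2Operator

/-- The sign `±1` encoded by a Boolean (`true ↦ 1`, `false ↦ −1`). -/
def sgn (b : Bool) : ℝ := if b then 1 else -1

/-- The coplanar spin matrix `σ(t) = [[0, e^{−it}],[e^{it},0]]`, with rows/columns indexed
by `Bool` (`true ↦ |1⟩`, `false ↦ |−1⟩`). -/
noncomputable def sigmaB (t : ℝ) : Matrix Bool Bool ℂ :=
  Matrix.of fun x y => if x = !y then Complex.exp ((sgn y : ℂ) * t * Complex.I) else 0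

/-- The Bell operator `Q = ∑_k c(k) σ(t_{k₁}¹) ⊗ ⋯ ⊗ σ(t_{kₙ}ⁿ)` on `(ℂ²)^{⊗n}`. -/
noncomputable def bellOp (n r : ℕ) (c : (Fin n → Fin r) → ℝ) (t : Fin r → Fin n → ℝ) :
    Matrix (Fin n → Bool) (Fin n → Bool) ℂ :=
  ∑ k : Fin n → Fin r,
    (c k : ℂ) • Matrix.of fun x y : Fin n → Bool => ∏ j : Fin n, sigmaB (t (k j) j) (x j) (y j)

namespace Matrix

variable {n 𝕜 : Type*} [Fintype n] [DecidableEq n] [RCLike 𝕜]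

lemma permMatrix_mem_unitary (σ : Equiv.Perm n) : σ.permMatrix 𝕜 ∈ unitary (Matrix n n 𝕜) := by
  simp [Unitary.mem_iff, star_eq_conjTranspose, ← permMatrix_mul]

lemma l2_opNorm_permMatrix_mul_diagonal (σ : Equiv.Perm n) (d : n → 𝕜) :
    ‖σ.permMatrix 𝕜 * diagonal d‖ = ‖d‖ :=
  (CStarRing.norm_mem_unitary_mul _ (permMatrix_mem_unitary σ)).trans (l2_opNorm_diagonal d)

end Matrix

lemma Pi.norm_eq_ciSup {ι E : Type*} [Fintype ι] [SeminormedAddGroup E] (f : ι → E) :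
    ‖f‖ = ⨆ i, ‖f i‖ := by
  rcases isEmpty_or_nonempty ι with _ | _
  · rw [Real.iSup_of_isEmpty, Subsingleton.elim f 0, norm_zero]
  · exact (IsGreatest.pi_norm f).csSup_eq.symm

def spinFlip (n : ℕ) : Equiv.Perm (Fin n → Bool) :=
  Equiv.piCongrRight fun _ => Equiv.boolNot

noncomputable def bellLambda (n r : ℕ) (c : (Fin n → Fin r) → ℝ) (t : Fin r → Fin n → ℝ)
    (ω : Fin n → Bool) : ℂ :=
  ∑ k : Fin n → Fin r,
    (c k : ℂ) * Complex.exp ((∑ j : Fin n, (sgn (ω j) * t (k j) j : ℂ)) * Complex.I)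

lemma prod_sigmaB_apply {n : ℕ} (s : Fin n → ℝ) (x y : Fin n → Bool) :
    ∏ j, sigmaB (s j) (x j) (y j) =
      if spinFlip n x = y then Complex.exp ((∑ j, (sgn (y j) * s j : ℂ)) * Complex.I) else 0 := by
  have hflip : spinFlip n x = y ↔ ∀ j, x j = !(y j) := by
    simp [spinFlip, funext_iff, Bool.eq_not_iff]
  simp [sigmaB, Finset.prod_ite_zero, hflip, ← Complex.exp_sum, Finset.sum_mul]

lemma bellOp_eq_permMatrix_mul_diagonal (n r : ℕ) (c : (Fin n → Fin r) → ℝ)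
    (t : Fin r → Fin n → ℝ) :
    bellOp n r c t = (spinFlip n).permMatrix ℂ * diagonal (bellLambda n r c t) := by
  ext x y
  simp only [bellOp, bellLambda, Matrix.sum_apply, Matrix.smul_apply, of_apply, prod_sigmaB_apply,
    mul_diagonal, PEquiv.toMatrix_apply, Equiv.toPEquiv_apply, Option.mem_def, Option.some_inj]
  split_ifs <;> simp [Finset.sum_mul]

/-- the (L2) operator norm of `Q` equals
`max_{ω ∈ {−1,1}ⁿ} |∑_k c(k) exp(i(ω₁ t_{k₁}¹ + ⋯ + ωₙ t_{kₙ}ⁿ))|`. -/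
theorem bellOp_norm_eq (n r : ℕ) (c : (Fin n → Fin r) → ℝ) (t : Fin r → Fin n → ℝ) :
    ‖bellOp n r c t‖ =
      ⨆ ω : Fin n → Bool,
        ‖∑ k : Fin n → Fin r,
          (c k : ℂ) *
            Complex.exp ((∑ j : Fin n, (sgn (ω j) * t (k j) j : ℂ)) * Complex.I)‖ := by
  rw [bellOp_eq_permMatrix_mul_diagonal, l2_opNorm_permMatrix_mul_diagonal, Pi.norm_eq_ciSup]
  rfl
end

section
/- Fix angles θ₀^j, θ₁^j ∈ ℝ for j = 1,…,n, and let f : {0,1}^n → {±1} be uniform random. Let Λ_f = max over ω ∈ {−1,1}^n of |∑_{ε} f(ε) c_ω(ε)|, where c_ω(ε) = 2^{-n} ∏_j (e^{iωⱼθ₀^j} + (−1)^{εⱼ} e^{iωⱼθ₁^j}). Then for every λ > 0, P(Λ_f ≥ λ) ≤ 2^{n+2} exp(−λ²/4). In particular, with λ = 2(n log 2 + log(4/δ))^{1/2}, P(Λ_f ≥ λ) ≤ δ, so for fixed angles a majority of Werner–Wolf operators have norm O(√n). -/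
/-!
For fixed `ω`, the amplitude `∑_ε f(ε) c_ω(ε)` is a Rademacher sum whose coefficients have
`∑_ε |c_ω(ε)|² = 1` (parallelogram law, one factor at a time). Its real and imaginary parts are
then sub-Gaussian with variance proxy `1`, and `|z| ≥ λ` forces `|Re z|` or `|Im z|` to be at
least `λ/√2`, so each `ω` contributes at most `4 exp(−λ²/4)`; a union bound over the `2ⁿ` sign
vectors `ω` gives the first claim, and the second is the first at `λ = 2 √(n log 2 + log(4/δ))`.
-/

open Finset Complex Real
open scoped Classical

/-- `c_ω(ε) = 2⁻ⁿ ∏ⱼ (e^{iωⱼθ₀ʲ} + (−1)^{εⱼ} e^{iωⱼθ₁ʲ})`, for a sign vector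
`ω ∈ {−1,1}ⁿ` encoded by `ω : Fin n → Bool`. -/
noncomputable def bellCoeffOmega (n : ℕ) (θ₀ θ₁ : Fin n → ℝ) (ω ε : Fin n → Bool) : ℂ :=
  (2 : ℂ)⁻¹ ^ n *
    ∏ j : Fin n,
      (Complex.exp ((sgn (ω j) * θ₀ j : ℝ) * Complex.I) +
        (if ε j then -1 else 1) * Complex.exp ((sgn (ω j) * θ₁ j : ℝ) * Complex.I))

section Rademacher

variable {α : Type*} [Fintype α] [DecidableEq α]

theorem sum_exp_mul_rademacher_sum (a : α → ℝ) (t : ℝ) :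
    ∑ f : α → Bool, Real.exp (t * ∑ x, sgn (f x) * a x) = ∏ x, 2 * Real.cosh (t * a x) := by
  calc ∑ f : α → Bool, Real.exp (t * ∑ x, sgn (f x) * a x)
      = ∑ f : α → Bool, ∏ x, Real.exp (t * (sgn (f x) * a x)) := by
        simp only [mul_sum, Real.exp_sum]
    _ = ∏ x, ∑ b : Bool, Real.exp (t * (sgn b * a x)) :=
        (Fintype.prod_sum fun x b => Real.exp (t * (sgn b * a x))).symm
    _ = ∏ x, 2 * Real.cosh (t * a x) := by
        refine prod_congr rfl fun x _ => ?_
        simp only [Fintype.sum_bool, sgn, Real.cosh_eq, if_true, Bool.false_eq_true, if_false]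
        ring_nf

theorem sum_exp_mul_rademacher_sum_le (a : α → ℝ) (t : ℝ) :
    ∑ f : α → Bool, Real.exp (t * ∑ x, sgn (f x) * a x) ≤
      Fintype.card (α → Bool) * Real.exp (t ^ 2 * (∑ x, a x ^ 2) / 2) := by
  rw [sum_exp_mul_rademacher_sum]
  calc ∏ x, 2 * Real.cosh (t * a x) ≤ ∏ x, 2 * Real.exp ((t * a x) ^ 2 / 2) :=
        prod_le_prod (fun x _ => by positivity)
          fun x _ => by gcongr; exact Real.cosh_le_exp_half_sq _
    _ = Fintype.card (α → Bool) * Real.exp (t ^ 2 * (∑ x, a x ^ 2) / 2) := by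
        rw [prod_mul_distrib, prod_const, ← Real.exp_sum, mul_sum, sum_div]
        simp [mul_pow]

theorem card_filter_le_mul_exp_le_sum_exp {β : Type*} (s : Finset β) (S : β → ℝ) {t : ℝ}
    (ht : 0 ≤ t) (r : ℝ) :
    #(s.filter fun b => r ≤ S b) * Real.exp (t * r) ≤ ∑ b ∈ s, Real.exp (t * S b) := by
  calc #(s.filter fun b => r ≤ S b) * Real.exp (t * r)
      ≤ ∑ b ∈ s.filter fun b => r ≤ S b, Real.exp (t * S b) := by
        rw [← nsmul_eq_mul]
        exact card_nsmul_le_sum _ _ _ fun b hb =>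
          Real.exp_le_exp.2 (mul_le_mul_of_nonneg_left (mem_filter.1 hb).2 ht)
    _ ≤ ∑ b ∈ s, Real.exp (t * S b) :=
        sum_le_sum_of_subset_of_nonneg (filter_subset _ _) fun _ _ _ => (Real.exp_pos _).le

theorem card_le_rademacher_sum_le (a : α → ℝ) (ha : ∑ x, a x ^ 2 ≤ 1) {t : ℝ} (ht : 0 ≤ t) :
    (#(univ.filter fun f : α → Bool => t ≤ ∑ x, sgn (f x) * a x) : ℝ) ≤
      Fintype.card (α → Bool) * Real.exp (-t ^ 2 / 2) := by
  have chernoff := (card_filter_le_mul_exp_le_sum_exp univ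
    (fun f : α → Bool => ∑ x, sgn (f x) * a x) ht t).trans (sum_exp_mul_rademacher_sum_le a t)
  rw [← le_div_iff₀ (Real.exp_pos _)] at chernoff
  calc _ ≤ Fintype.card (α → Bool) * Real.exp (t ^ 2 * (∑ x, a x ^ 2) / 2) / Real.exp (t * t) :=
        chernoff
    _ ≤ Fintype.card (α → Bool) * Real.exp (t ^ 2 * 1 / 2) / Real.exp (t * t) := by gcongr
    _ = Fintype.card (α → Bool) * Real.exp (-t ^ 2 / 2) := by
        rw [mul_div_assoc, ← Real.exp_sub]
        ring_nf

theorem card_le_abs_rademacher_sum_le (a : α → ℝ) (ha : ∑ x, a x ^ 2 ≤ 1) {t : ℝ}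
    (ht : 0 ≤ t) :
    (#(univ.filter fun f : α → Bool => t ≤ |∑ x, sgn (f x) * a x|) : ℝ) ≤
      2 * Fintype.card (α → Bool) * Real.exp (-t ^ 2 / 2) := by
  have hcover : (#(univ.filter fun f : α → Bool => t ≤ |∑ x, sgn (f x) * a x|) : ℝ) ≤
      #(univ.filter fun f : α → Bool => t ≤ ∑ x, sgn (f x) * a x) +
        #(univ.filter fun f : α → Bool => t ≤ ∑ x, sgn (f x) * (-a) x) := by
    simp only [Pi.neg_apply, mul_neg, sum_neg_distrib, le_abs, filter_or]
    exact_mod_cast card_union_le _ _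
  linarith [card_le_rademacher_sum_le a ha ht,
    card_le_rademacher_sum_le (-a) (by simpa using ha) ht]

theorem card_le_norm_rademacher_sum_le (c : α → ℂ) (hc : ∑ x, ‖c x‖ ^ 2 ≤ 1) {r : ℝ}
    (hr : 0 ≤ r) :
    (#(univ.filter fun f : α → Bool => r ≤ ‖∑ x, (sgn (f x) : ℂ) * c x‖) : ℝ) ≤
      4 * Fintype.card (α → Bool) * Real.exp (-r ^ 2 / 4) := by
  set t := r / √2
  have hsplit : ∀ z : ℂ, r ≤ ‖z‖ → t ≤ |z.re| ∨ t ≤ |z.im| := fun z hz =>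
    le_max_iff.1 <| (div_le_iff₀' (by positivity)).2 (hz.trans (norm_le_sqrt_two_mul_max z))
  have hcover : (#(univ.filter fun f : α → Bool => r ≤ ‖∑ x, (sgn (f x) : ℂ) * c x‖) : ℝ) ≤
      #(univ.filter fun f : α → Bool => t ≤ |∑ x, sgn (f x) * (c x).re|) +
        #(univ.filter fun f : α → Bool => t ≤ |∑ x, sgn (f x) * (c x).im|) := by
    have := card_le_card <| monotone_filter_right (univ : Finset (α → Bool))
      fun f _ => hsplit (∑ x, (sgn (f x) : ℂ) * c x)
    simp only [filter_or, re_sum, im_sum, re_ofReal_mul, im_ofReal_mul] at this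
    exact_mod_cast this.trans (card_union_le _ _)
  have hre := card_le_abs_rademacher_sum_le (fun x => (c x).re)
    ((sum_le_sum fun x _ => by rw [Complex.sq_norm, sq]; exact re_sq_le_normSq _).trans hc)
    (t := t) (by positivity)
  have him := card_le_abs_rademacher_sum_le (fun x => (c x).im)
    ((sum_le_sum fun x _ => by rw [Complex.sq_norm, sq]; exact im_sq_le_normSq _).trans hc)
    (t := t) (by positivity)
  have hexp : Real.exp (-t ^ 2 / 2) = Real.exp (-r ^ 2 / 4) := by
    rw [div_pow, Real.sq_sqrt zero_le_two]
    ring_nf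
  rw [hexp] at hre him
  linarith

end Rademacher

theorem card_filter_exists_le_sum_card {ι β : Type*} [Fintype ι] [Fintype β] [DecidableEq β]
    (P : ι → β → Prop) [∀ i, DecidablePred (P i)] [DecidablePred fun b => ∃ i, P i b] :
    #(univ.filter fun b => ∃ i, P i b) ≤ ∑ i, #(univ.filter (P i)) :=
  (card_le_card fun b hb => by simpa using hb).trans card_biUnion_le

theorem sum_norm_sq_prod_add_sign_mul {ι : Type*} [Fintype ι] [DecidableEq ι] (u v : ι → ℂ) :
    ∑ ε : ι → Bool, ‖∏ j, (u j + (if ε j then -1 else 1) * v j)‖ ^ 2 =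
      ∏ j, 2 * (‖u j‖ ^ 2 + ‖v j‖ ^ 2) := by
  simp_rw [norm_prod, ← prod_pow]
  calc _ = ∏ j, ∑ b : Bool, ‖u j + (if b then -1 else 1) * v j‖ ^ 2 :=
        (Fintype.prod_sum (κ := fun _ => Bool)
          fun j b => ‖u j + (if b then -1 else 1) * v j‖ ^ 2).symm
    _ = _ := by
        refine prod_congr rfl fun j _ => ?_
        simp only [Fintype.sum_bool, if_true, Bool.false_eq_true, if_false, neg_one_mul,
          one_mul, ← sub_eq_add_neg]
        rw [add_comm, parallelogram_law_with_norm ℂ]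

theorem sum_norm_sq_bellCoeffOmega (n : ℕ) (θ₀ θ₁ : Fin n → ℝ) (ω : Fin n → Bool) :
    ∑ ε, ‖bellCoeffOmega n θ₀ θ₁ ω ε‖ ^ 2 = 1 := by
  calc ∑ ε, ‖bellCoeffOmega n θ₀ θ₁ ω ε‖ ^ 2
      = ‖(2 : ℂ)⁻¹ ^ n‖ ^ 2 * ∑ ε : Fin n → Bool,
          ‖∏ j, (Complex.exp ((sgn (ω j) * θ₀ j : ℝ) * Complex.I) +
            (if ε j then -1 else 1) * Complex.exp ((sgn (ω j) * θ₁ j : ℝ) * Complex.I))‖ ^ 2 := by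
        rw [mul_sum]
        exact sum_congr rfl fun ε _ => by rw [bellCoeffOmega, norm_mul, mul_pow]
    _ = 1 := by
        rw [sum_norm_sq_prod_add_sign_mul]
        simp only [norm_exp_ofReal_mul_I, prod_const, card_univ, Fintype.card_fin, norm_pow,
          norm_inv, Complex.norm_ofNat]
        rw [← pow_mul, mul_comm n, pow_mul, ← mul_pow]
        norm_num

theorem card_filter_exists_le_norm_sum_bellCoeffOmega_div_card_le (n : ℕ) (θ₀ θ₁ : Fin n → ℝ)
    {r : ℝ} (hr : 0 ≤ r) :
    (#(univ.filter fun f : (Fin n → Bool) → Bool => ∃ ω : Fin n → Bool,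
        r ≤ ‖∑ ε, (sgn (f ε) : ℂ) * bellCoeffOmega n θ₀ θ₁ ω ε‖) : ℝ) /
        Fintype.card ((Fin n → Bool) → Bool) ≤ 2 ^ (n + 2) * Real.exp (-r ^ 2 / 4) := by
  rw [div_le_iff₀ (by exact_mod_cast Fintype.card_pos)]
  calc _ ≤ ∑ ω : Fin n → Bool, (#(univ.filter fun f : (Fin n → Bool) → Bool =>
          r ≤ ‖∑ ε, (sgn (f ε) : ℂ) * bellCoeffOmega n θ₀ θ₁ ω ε‖) : ℝ) := by
        rw [← Nat.cast_sum]
        exact Nat.cast_le.2 (card_filter_exists_le_sum_card _)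
    _ ≤ ∑ _ω : Fin n → Bool,
          4 * Fintype.card ((Fin n → Bool) → Bool) * Real.exp (-r ^ 2 / 4) :=
        sum_le_sum fun ω _ =>
          card_le_norm_rademacher_sum_le _ (sum_norm_sq_bellCoeffOmega n θ₀ θ₁ ω).le hr
    _ = _ := by
        simp only [sum_const, card_univ, Fintype.card_fun, Fintype.card_bool, Fintype.card_fin,
          nsmul_eq_mul]
        push_cast
        ring

/-- for fixed angles and uniformly random `f : {0,1}ⁿ → {±1}`, the quantity
`Λ_f = max_ω |∑_ε f(ε) c_ω(ε)|` satisfies `P(Λ_f ≥ λ) ≤ 2^{n+2} exp(−λ²/4)` for every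
`λ > 0`; in particular for `λ = 2 (n log 2 + log(4/δ))^{1/2}`, `P(Λ_f ≥ λ) ≤ δ`. -/
theorem random_wwOp_norm_tail (n : ℕ) (θ₀ θ₁ : Fin n → ℝ) :
    (∀ lam : ℝ, 0 < lam →
      ((Finset.univ.filter (fun f : (Fin n → Bool) → Bool =>
          ∃ ω : Fin n → Bool, lam ≤ ‖∑ ε : Fin n → Bool,
            (sgn (f ε) : ℂ) * bellCoeffOmega n θ₀ θ₁ ω ε‖)).card : ℝ) /
          (Fintype.card ((Fin n → Bool) → Bool) : ℝ) ≤
        2 ^ (n + 2) * Real.exp (-lam ^ 2 / 4)) ∧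
    (∀ δ : ℝ, 0 < δ →
      ((Finset.univ.filter (fun f : (Fin n → Bool) → Bool =>
          ∃ ω : Fin n → Bool,
            2 * Real.sqrt (n * Real.log 2 + Real.log (4 / δ)) ≤
              ‖∑ ε : Fin n → Bool,
                (sgn (f ε) : ℂ) * bellCoeffOmega n θ₀ θ₁ ω ε‖)).card : ℝ) /
          (Fintype.card ((Fin n → Bool) → Bool) : ℝ) ≤ δ) := by
  refine ⟨fun lam hlam =>
    card_filter_exists_le_norm_sum_bellCoeffOmega_div_card_le n θ₀ θ₁ hlam.le, fun δ hδ =>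
    (card_filter_exists_le_norm_sum_bellCoeffOmega_div_card_le n θ₀ θ₁ (by positivity)).trans ?_⟩
  set A := (n : ℝ) * Real.log 2 + Real.log (4 / δ)
  have hδ_eq : 2 ^ (n + 2) * Real.exp (-A) = δ := by
    rw [Real.exp_neg, Real.exp_add, Real.exp_nat_mul, Real.exp_log two_pos,
      Real.exp_log (by positivity)]
    field_simp
    ring
  -- `√A = 0` when `A < 0`; the bound still holds since then `√A ^ 2 = max A 0 ≥ A`.
  calc 2 ^ (n + 2) * Real.exp (-(2 * √A) ^ 2 / 4) ≤ 2 ^ (n + 2) * Real.exp (-A) := by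
        rw [mul_pow, Real.sq_sqrt']
        gcongr
        linarith [le_max_left A 0]
    _ = δ := hδ_eq
end
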